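/- Let G be a countable group, μ a symmetric probability measure on G, π : G → U(H) a unitary representation, and b, b' 1-cocycles with finite μ-norm. Define ⟨b,b'⟩_μ = Σ_g ⟨b(g), b'(g)⟩ μ(g). Then a cocycle b satisfies Σ_g b(g) μ(g) = 0 (μ-harmonicity) if and only if b is orthogonal to every coboundary g ↦ v − π(g)v (with v ∈ H of finite μ-norm) with respect to ⟨·,·⟩_μ. -/

import Mathlib

/-!
For a cocycle, `⟪b g, π g v⟫ = -⟪b g⁻¹, v⟫`; summing against the symmetric `μ` turns the
pairing of `b` with the coboundary of `v` into `2 ⟪∑ μ(g) b(g), v⟫`. Hence harmonicity gives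
orthogonality, and conversely, testing against the coboundary of `v = ∑ μ(g) b(g)` (of finite
`μ`-norm because `π` is isometric and `μ` summable) forces `v = 0`.
-/

open scoped InnerProductSpace

section

variable {G 𝕜 H : Type*} [Group G] [RCLike 𝕜] [NormedAddCommGroup H] [InnerProductSpace 𝕜 H]

theorem hasSum_mul_inner_of_hasSum_smul [Module ℝ H] [IsScalarTower ℝ 𝕜 H] {ι : Type*}
    {μ : ι → ℝ} {b : ι → H} {w : H} (hw : HasSum (fun i => μ i • b i) w) (v : H) :
    HasSum (fun i => (μ i : 𝕜) * ⟪b i, v⟫_𝕜) ⟪w, v⟫_𝕜 := by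
  simpa only [innerSL_apply_apply, RCLike.star_def, inner_conj_symm,
    RCLike.real_smul_eq_coe_smul (K := 𝕜), inner_smul_left, RCLike.conj_ofReal]
    using (hw.mapL (innerSL 𝕜 v)).star

theorem summable_mul_norm_sub_apply_sq {ι : Type*} (π : ι → H ≃ₗᵢ[𝕜] H) {μ : ι → ℝ}
    (hμ : Summable μ) (v : H) : Summable fun g => μ g * ‖v - π g v‖ ^ 2 := by
  refine Summable.of_norm_bounded (hμ.norm.mul_right ((2 * ‖v‖) ^ 2)) fun g => ?_
  have hle : ‖v - π g v‖ ≤ 2 * ‖v‖ := by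
    simpa [two_mul] using norm_sub_le v (π g v)
  rw [norm_mul, norm_pow, norm_norm]
  gcongr

def IsCocycle (π : G →* (H ≃ₗᵢ[𝕜] H)) (b : G → H) : Prop :=
  ∀ g h, b (g * h) = b g + π g (b h)

namespace IsCocycle

variable {π : G →* (H ≃ₗᵢ[𝕜] H)} {b : G → H}

theorem map_one (hb : IsCocycle π b) : b 1 = 0 := by
  simpa using hb 1 1

theorem map_inv (hb : IsCocycle π b) (g : G) : b g⁻¹ = -π g⁻¹ (b g) := by
  have h := hb g⁻¹ g
  rw [inv_mul_cancel, hb.map_one] at h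
  exact eq_neg_of_add_eq_zero_left h.symm

theorem inner_apply_right (hb : IsCocycle π b) (g : G) (v : H) :
    ⟪b g, π g v⟫_𝕜 = -⟪b g⁻¹, v⟫_𝕜 := by
  have hv : π g⁻¹ (π g v) = v := by
    rw [_root_.map_inv, LinearIsometryEquiv.coe_inv, LinearIsometryEquiv.symm_apply_apply]
  rw [hb.map_inv, inner_neg_left, neg_neg, ← hv, LinearIsometryEquiv.inner_map_map, hv]

theorem hasSum_mul_inner_sub_apply [Module ℝ H] [IsScalarTower ℝ 𝕜 H]
    (hb : IsCocycle π b) {μ : G → ℝ} (hμsym : ∀ g, μ g⁻¹ = μ g) {w : H}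
    (hw : HasSum (fun g => μ g • b g) w) (v : H) :
    HasSum (fun g => (μ g : 𝕜) * ⟪b g, v - π g v⟫_𝕜) (2 * ⟪w, v⟫_𝕜) := by
  have hf := hasSum_mul_inner_of_hasSum_smul (𝕜 := 𝕜) hw v
  have hf_inv := (Equiv.inv G).hasSum_iff.mpr hf
  rw [two_mul]
  convert hf.add hf_inv using 2 with g
  simp only [Function.comp_apply, Equiv.inv_apply, inner_sub_right, hb.inner_apply_right, hμsym]
  ring

end IsCocycle

end

theorem stmt_3_general {G : Type*} [Group G] {H : Type*} [NormedAddCommGroup H]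
    [InnerProductSpace ℂ H]
    (μ : G → ℝ) (hμ1 : ∑' g, μ g = 1) (hμsym : ∀ g, μ g⁻¹ = μ g)
    (π : G →* (H ≃ₗᵢ[ℂ] H)) (b : G → H)
    (hb : ∀ g h : G, b (g * h) = b g + π g (b h))
    (hbsum : Summable fun g => μ g • b g) :
    (∑' g, μ g • b g) = 0 ↔
      ∀ v : H, (Summable fun g => μ g * ‖v - π g v‖ ^ 2) →
        (∑' g, (μ g : ℂ) * (inner ℂ (b g) (v - π g v) : ℂ)) = 0 := by
  have hμ : Summable μ := by
    by_contra h
    simp [tsum_eq_zero_of_not_summable h] at hμ1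
  set w := ∑' g, μ g • b g
  have pairing (v : H) : ∑' g, (μ g : ℂ) * inner ℂ (b g) (v - π g v) = 2 * inner ℂ w v :=
    (IsCocycle.hasSum_mul_inner_sub_apply hb hμsym hbsum.hasSum v).tsum_eq
  constructor
  · intro hw v _
    rw [pairing, hw, inner_zero_left, mul_zero]
  · intro horth
    have hww := horth w (summable_mul_norm_sub_apply_sq π hμ w)
    rw [pairing, mul_eq_zero, inner_self_eq_zero] at hww
    exact hww.resolve_left two_ne_zero

/-- For a symmetric probability measure `μ` on a countable group `G` and a 1-cocycle `b`
of finite `μ`-norm for a unitary representation `π`, the cocycle `b` is `μ`-harmonic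
(`Σ_g μ(g) b(g) = 0`) iff `b` is orthogonal, w.r.t. `⟨b,b'⟩_μ = Σ_g ⟨b(g),b'(g)⟩ μ(g)`,
to every coboundary `g ↦ v − π(g)v` of finite `μ`-norm. -/
theorem stmt_3 {G : Type*} [Group G] [Countable G] {H : Type*} [NormedAddCommGroup H]
    [InnerProductSpace ℂ H] [CompleteSpace H]
    (μ : G → ℝ) (hμ0 : ∀ g, 0 ≤ μ g) (hμ1 : ∑' g, μ g = 1) (hμsym : ∀ g, μ g⁻¹ = μ g)
    (π : G →* (H ≃ₗᵢ[ℂ] H)) (b : G → H)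
    (hb : ∀ g h : G, b (g * h) = b g + π g (b h))
    (hbsum : Summable fun g => μ g • b g)
    (hbnorm : Summable fun g => μ g * ‖b g‖ ^ 2) :
    (∑' g, μ g • b g) = 0 ↔
      ∀ v : H, (Summable fun g => μ g * ‖v - π g v‖ ^ 2) →
        (∑' g, (μ g : ℂ) * (inner ℂ (b g) (v - π g v) : ℂ)) = 0 :=
  stmt_3_general μ hμ1 hμsym π b hb hbsum
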